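/- Let G=(V,E) be a graph, f : V → {0,1,2}, and let G' = G[V_0(f) ∪ V_2(f)] be the subgraph induced by V_0(f) ∪ V_2(f). Then f is a minimal Roman dominating function if and only if: (1) N[V_2(f)] ∩ V_1(f) = ∅; (2) for all v ∈ V_2(f), P_{G',V_2(f)}(v) ⊄ {v}, i.e., v has a private neighbor with respect to G' and V_2(f) other than itself; (3) V_2(f) is a minimal dominating set of G'. -/
import Mathlib


/-- A Roman dominating function: every vertex with value 0 has a neighbor with value 2. -/
def IsRDF {V : Type*} (G : SimpleGraph V) (f : V → Fin 3) : Prop :=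
  ∀ v, f v = 0 → ∃ u, G.Adj v u ∧ f u = 2

/-- The closed neighborhood `N[A]` of a set of vertices. -/
def closedNbhd {V : Type*} (G : SimpleGraph V) (A : Set V) : Set V :=
  A ∪ {u | ∃ a ∈ A, G.Adj a u}

/-- The private neighborhood `P_{G,A}(v) = N[v] \ N[A \ {v}]`. -/
def privNbhd {V : Type*} (G : SimpleGraph V) (A : Set V) (v : V) : Set V :=
  closedNbhd G {v} \ closedNbhd G (A \ {v})

/-- `D` is a dominating set: `N[D] = V`. -/
def IsDomSet {V : Type*} (G : SimpleGraph V) (D : Set V) : Prop :=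
  ∀ v, v ∈ closedNbhd G D

/-- `D` is a minimal dominating set: it is dominating and no proper subset of it is. -/
def IsMinDomSet {V : Type*} (G : SimpleGraph V) (D : Set V) : Prop :=
  IsDomSet G D ∧ ∀ D' ⊂ D, ¬ IsDomSet G D'

/-- The set `V_0(f) ∪ V_2(f)`. -/
def supp02 {V : Type*} (f : V → Fin 3) : Set V := {x | f x = 0 ∨ f x = 2}

private lemma fin3_cases (x : Fin 3) : x = 0 ∨ x = 1 ∨ x = 2 := by revert x; decide
private lemma fin3_two_le (x : Fin 3) (h : 2 ≤ x) : x = 2 := by revert x; decide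
private lemma fin3_le_zero (x : Fin 3) (h : x ≤ 0) : x = 0 := by revert x; decide
private lemma fin3_lt_one (x : Fin 3) (h : x < 1) : x = 0 := by revert x; decide
private lemma fin3_lt_two (x : Fin 3) (h : x < 2) : x ≤ 1 := by revert x; decide

theorem stmt16 {V : Type*} [Fintype V] [DecidableEq V] (G : SimpleGraph V)
    (f : V → Fin 3) :
    Minimal (IsRDF G) f ↔
      -- (1) N[V_2(f)] ∩ V_1(f) = ∅
      (closedNbhd G {v | f v = 2} ∩ {v | f v = 1} = ∅ ∧
       -- (2) in G' = G[V_0(f) ∪ V_2(f)], every v ∈ V_2(f) satisfies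
       -- P_{G',V_2(f)}(v) ⊄ {v}
       (∀ v : supp02 f, f (v : V) = 2 →
         ¬ privNbhd (G.induce (supp02 f)) {w : supp02 f | f (w : V) = 2} v ⊆ {v}) ∧
       -- (3) V_2(f) is a minimal dominating set of G'
       IsMinDomSet (G.induce (supp02 f)) {w : supp02 f | f (w : V) = 2}) := by
  classical
  constructor
  · rintro ⟨hf, hmin⟩
    refine ⟨?_, ?_, ?_, ?_⟩
    · -- (1)
      by_contra h
      obtain ⟨x, hxN, hx1⟩ := Set.nonempty_iff_ne_empty.mpr h
      have hx1 : f x = 1 := hx1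
      obtain ⟨a, ha2, hax⟩ : ∃ a, f a = 2 ∧ G.Adj a x := by
        rcases hxN with h | ⟨a, ha, hax⟩
        · have h' : f x = 2 := h
          rw [hx1] at h'
          exact absurd h' (by decide)
        · exact ⟨a, ha, hax⟩
      set g : V → Fin 3 := Function.update f x 0 with hg
      have hgRDF : IsRDF G g := by
        intro w hw
        by_cases hwx : w = x
        · subst hwx
          exact ⟨a, hax.symm, by
            rw [hg, Function.update_of_ne (by rintro rfl; rw [hx1] at ha2; exact absurd ha2 (by decide))]
            exact ha2⟩
        · rw [hg, Function.update_of_ne hwx] at hw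
          obtain ⟨u, hwu, hu2⟩ := hf w hw
          exact ⟨u, hwu, by
            rw [hg, Function.update_of_ne (by rintro rfl; rw [hx1] at hu2; exact absurd hu2 (by decide))]
            exact hu2⟩
      have hglef : g ≤ f := by
        intro w
        by_cases hwx : w = x
        · subst hwx; rw [hg, Function.update_self]; exact Fin.zero_le _
        · rw [hg, Function.update_of_ne hwx]
      have := hmin hgRDF hglef x
      rw [hg, Function.update_self, hx1] at this
      exact (by decide : ¬((1:Fin 3) ≤ 0)) this
    · -- (2)
      intro v hv2 hsub
      have key : ∀ w, f w = 0 → ∃ a, a ≠ (v : V) ∧ G.Adj w a ∧ f a = 2 := by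
        intro w hw0
        obtain ⟨u, hwu, hu2⟩ := hf w hw0
        by_cases huv : u = (v : V)
        · subst huv
          have hwmem : w ∈ supp02 f := Or.inl hw0
          have hwin : (⟨w, hwmem⟩ : supp02 f) ∈
              closedNbhd (G.induce (supp02 f)) {v} :=
            Or.inr ⟨v, rfl, hwu.symm⟩
          have hwnp : (⟨w, hwmem⟩ : supp02 f) ∉
              privNbhd (G.induce (supp02 f)) {w : supp02 f | f (w : V) = 2} v := by
            intro hp
            have h' := Set.mem_singleton_iff.mp (hsub hp)
            have h'' := congrArg (fun z : supp02 f => f (z : V)) h'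
            simp only [hw0, hv2] at h''
            exact absurd h'' (by decide)
          have hwB : (⟨w, hwmem⟩ : supp02 f) ∈
              closedNbhd (G.induce (supp02 f))
                ({w : supp02 f | f (w : V) = 2} \ {v}) := by
            by_contra hB
            exact hwnp ⟨hwin, hB⟩
          rcases hwB with ⟨h2', _⟩ | ⟨a, ⟨ha2, hav⟩, hadj⟩
          · have h2'' : f w = 2 := h2'
            rw [hw0] at h2''
            exact absurd h2'' (by decide)
          · exact ⟨(a : V), fun h => hav (Subtype.coe_injective h), hadj.symm, ha2⟩
        · exact ⟨u, huv, hwu, hu2⟩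
      set g : V → Fin 3 := Function.update f (v : V) 1 with hg
      have hgRDF : IsRDF G g := by
        intro w hw
        have hwv : w ≠ (v : V) := by
          rintro rfl; rw [hg, Function.update_self] at hw; exact absurd hw (by decide)
        rw [hg, Function.update_of_ne hwv] at hw
        obtain ⟨a, hav, hwa, ha2⟩ := key w hw
        exact ⟨a, hwa, by rw [hg, Function.update_of_ne hav]; exact ha2⟩
      have hglef : g ≤ f := by
        intro w
        by_cases hwv : w = (v : V)
        · subst hwv; rw [hg, Function.update_self, hv2]
          exact (by decide : (1:Fin 3) ≤ 2)
        · rw [hg, Function.update_of_ne hwv]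
      have := hmin hgRDF hglef (v : V)
      rw [hg, Function.update_self, hv2] at this
      exact (by decide : ¬((2:Fin 3) ≤ 1)) this
    · -- (3) domination
      intro w
      rcases w.2 with hw0 | hw2
      · obtain ⟨u, hwu, hu2⟩ := hf (w : V) hw0
        exact Or.inr ⟨⟨u, Or.inr hu2⟩, hu2, hwu.symm⟩
      · exact Or.inl hw2
    · -- (3) minimality
      intro D' hD' hDdom
      have hsub : D' ⊆ {w : supp02 f | f (w : V) = 2} := hD'.1
      obtain ⟨v, hv2, hvD⟩ := Set.exists_of_ssubset hD'
      have hv2 : f (v : V) = 2 := hv2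
      set g : V → Fin 3 := fun w =>
        if hw : f w = 2 then (if (⟨w, Or.inr hw⟩ : supp02 f) ∈ D' then 2 else 0)
        else f w with hg
      have hg2 : ∀ a : supp02 f, a ∈ D' → g (a : V) = 2 := by
        intro a ha
        have hfa : f (a : V) = 2 := hsub ha
        rw [hg]
        simp only
        rw [dif_pos hfa, if_pos (show (⟨(a : V), Or.inr hfa⟩ : supp02 f) ∈ D' from ha)]
      have hgRDF : IsRDF G g := by
        intro w hw0
        have hwmem : w ∈ supp02 f := by
          by_cases hfw : f w = 2
          · exact Or.inr hfw
          · rw [hg] at hw0; simp only [dif_neg hfw] at hw0; exact Or.inl hw0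
        have hwD : (⟨w, hwmem⟩ : supp02 f) ∉ D' := by
          intro hD
          rw [hg2 ⟨w, hwmem⟩ hD] at hw0
          exact absurd hw0 (by decide)
        rcases hDdom ⟨w, hwmem⟩ with h | ⟨a, ha, hadj⟩
        · exact absurd h hwD
        · exact ⟨(a : V), hadj.symm, hg2 a ha⟩
      have hglef : g ≤ f := by
        intro w
        rw [hg]
        simp only
        by_cases hfw : f w = 2
        · rw [dif_pos hfw]
          split
          · rw [hfw]
          · exact Fin.zero_le _
        · rw [dif_neg hfw]
      have := hmin hgRDF hglef (v : V)
      have hgv : g (v : V) = 0 := by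
        rw [hg]
        simp only
        rw [dif_pos hv2, if_neg]
        intro h
        exact hvD (show v ∈ D' from h)
      rw [hgv, hv2] at this
      exact (by decide : ¬((2:Fin 3) ≤ 0)) this
  · rintro ⟨h1, h2, hdom, hminD⟩
    have hfRDF : IsRDF G f := by
      intro w hw0
      have hwmem : w ∈ supp02 f := Or.inl hw0
      rcases hdom ⟨w, hwmem⟩ with h | ⟨a, ha2, hadj⟩
      · have h : f w = 2 := h
        rw [hw0] at h; exact absurd h (by decide)
      · exact ⟨(a : V), hadj.symm, ha2⟩
    refine ⟨hfRDF, ?_⟩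
    intro g hg hglef
    intro w
    by_contra hlt
    push_neg at hlt
    rcases fin3_cases (f w) with hfw | hfw | hfw
    · rw [hfw] at hlt
      exact absurd hlt (Fin.not_lt_zero _)
    · -- f w = 1, g w = 0, contradicts (1)
      rw [hfw] at hlt
      have hgw : g w = 0 := fin3_lt_one _ hlt
      obtain ⟨u, hwu, hu2⟩ := hg w hgw
      have hfu : f u = 2 := fin3_two_le _ (hu2 ▸ hglef u)
      have hmem : w ∈ closedNbhd G {v | f v = 2} ∩ {v | f v = 1} :=
        ⟨Or.inr ⟨u, hfu, hwu.symm⟩, hfw⟩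
      rw [h1] at hmem
      exact hmem
    · -- f w = 2, g w ≤ 1
      have hgw : g w ≤ 1 := fin3_lt_two _ (hfw ▸ hlt)
      have hwmem : w ∈ supp02 f := Or.inr hfw
      have hns := h2 ⟨w, hwmem⟩ hfw
      rw [Set.not_subset] at hns
      obtain ⟨p, hp, hpn⟩ := hns
      rw [Set.mem_singleton_iff] at hpn
      obtain ⟨hpA, hpB⟩ := hp
      have hadj : (G.induce (supp02 f)).Adj ⟨w, hwmem⟩ p := by
        rcases hpA with h | ⟨a, ha, hadj⟩
        · exact absurd (Set.mem_singleton_iff.mp h) hpn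
        · rw [Set.mem_singleton_iff] at ha; subst ha; exact hadj
      have hfp : f (p : V) = 0 := by
        rcases p.2 with h | h
        · exact h
        · exact absurd (Or.inl ⟨h, fun hh => hpn (Set.mem_singleton_iff.mp hh)⟩) hpB
      have hgp : g (p : V) = 0 := fin3_le_zero _ (hfp ▸ hglef (p : V))
      obtain ⟨u, hpu, hu2⟩ := hg (p : V) hgp
      have hfu : f u = 2 := fin3_two_le _ (hu2 ▸ hglef u)
      have huw : u ≠ w := by
        rintro rfl
        rw [hu2] at hgw
        exact absurd hgw (by decide)
      refine hpB (Or.inr ⟨⟨u, Or.inr hfu⟩, ⟨hfu, ?_⟩, hpu.symm⟩)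
      intro h
      exact huw (congrArg Subtype.val (Set.mem_singleton_iff.mp h))
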